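/- arXiv:chao-dyn/9305007 — 4 statements merged into one kernel-verified Lean document; each statement's English description precedes it below -/
import Mathlib

section
/- For the nonrotational pendulum solution θ(t) with elliptic modulus k = sin(a/2) and motor characteristic M(v) = m₁ + m₂v, the integral I₃ = ∫₀^{K₂·4K(k)} θ̇(t)·M(θ̇(t)) dt equals 16 m₂ K₂ (E(k) - (1-k²)K(k)), where K(k) and E(k) are the complete elliptic integrals of the first and second kind. -/
open Real MeasureTheory

/-- Incomplete elliptic integral of the first kind `F(φ, k)`. -/
noncomputable def ellF (k φ : ℝ) : ℝ :=
  ∫ s in (0:ℝ)..φ, 1 / Real.sqrt (1 - k ^ 2 * Real.sin s ^ 2)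

/-- Complete elliptic integral of the first kind `K(k)`. -/
noncomputable def ellK (k : ℝ) : ℝ := ellF k (π / 2)

/-- Incomplete elliptic integral of the second kind `E(φ, k)`. -/
noncomputable def ellEinc (k φ : ℝ) : ℝ :=
  ∫ s in (0:ℝ)..φ, Real.sqrt (1 - k ^ 2 * Real.sin s ^ 2)

/-- Complete elliptic integral of the second kind `E(k)`. -/
noncomputable def ellE (k : ℝ) : ℝ := ellEinc k (π / 2)

/-- Jacobi amplitude `am(u, k)`: inverse of `φ ↦ F(φ, k)`. -/
noncomputable def am (k u : ℝ) : ℝ := Function.invFun (ellF k) u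

/-- Jacobi elliptic sine `sn(u, k)`. -/
noncomputable def sn (k u : ℝ) : ℝ := Real.sin (am k u)

/-- Jacobi delta amplitude `dn(u, k)`. -/
noncomputable def dn (k u : ℝ) : ℝ := Real.sqrt (1 - k ^ 2 * sn k u ^ 2)

/-- Jacobi's nome `q = exp (-π K'(k)/K(k))`. -/
noncomputable def nome (k : ℝ) : ℝ :=
  Real.exp (-π * ellK (Real.sqrt (1 - k ^ 2)) / ellK k)

section aux

variable {k : ℝ}

lemma Qpos (hk0 : 0 < k) (hk1 : k < 1) (s : ℝ) : 0 < 1 - k ^ 2 * Real.sin s ^ 2 := by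
  nlinarith [Real.sin_sq_le_one s, sq_nonneg (Real.sin s)]

lemma hpos (hk0 : 0 < k) (hk1 : k < 1) (s : ℝ) :
    0 < Real.sqrt (1 - k ^ 2 * Real.sin s ^ 2) :=
  Real.sqrt_pos.mpr (Qpos hk0 hk1 s)

lemma hle1 (s : ℝ) : Real.sqrt (1 - k ^ 2 * Real.sin s ^ 2) ≤ 1 := by
  rw [Real.sqrt_le_one]
  nlinarith [sq_nonneg (k * Real.sin s)]

lemma hcontinuous : Continuous (fun s => Real.sqrt (1 - k ^ 2 * Real.sin s ^ 2)) := by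
  fun_prop

lemma hinvcont (hk0 : 0 < k) (hk1 : k < 1) :
    Continuous (fun s => 1 / Real.sqrt (1 - k ^ 2 * Real.sin s ^ 2)) :=
  continuous_const.div hcontinuous (fun s => (hpos hk0 hk1 s).ne')

lemma gderiv (hk0 : 0 < k) (hk1 : k < 1) (φ : ℝ) :
    HasDerivAt (ellF k) (1 / Real.sqrt (1 - k ^ 2 * Real.sin φ ^ 2)) φ :=
  ((hinvcont hk0 hk1).integral_hasStrictDerivAt 0 φ).hasDerivAt

lemma gmono (hk0 : 0 < k) (hk1 : k < 1) : StrictMono (ellF k) := by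
  apply strictMono_of_deriv_pos
  intro φ
  rw [(gderiv hk0 hk1 φ).deriv]
  exact div_pos one_pos (hpos hk0 hk1 φ)

lemma gge (hk0 : 0 < k) (hk1 : k < 1) {φ : ℝ} (hφ : 0 ≤ φ) : φ ≤ ellF k φ := by
  have : ∫ s in (0:ℝ)..φ, (1:ℝ) ≤ ∫ s in (0:ℝ)..φ, 1 / Real.sqrt (1 - k ^ 2 * Real.sin s ^ 2) := by
    apply intervalIntegral.integral_mono_on hφ intervalIntegrable_const
      ((hinvcont hk0 hk1).intervalIntegrable _ _)
    intro s _
    rw [le_div_iff₀ (hpos hk0 hk1 s), one_mul]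
    exact hle1 s
  simpa [ellF] using this

lemma gle (hk0 : 0 < k) (hk1 : k < 1) {φ : ℝ} (hφ : φ ≤ 0) : ellF k φ ≤ φ := by
  have : ∫ s in φ..(0:ℝ), (1:ℝ) ≤ ∫ s in φ..(0:ℝ), 1 / Real.sqrt (1 - k ^ 2 * Real.sin s ^ 2) := by
    apply intervalIntegral.integral_mono_on hφ intervalIntegrable_const
      ((hinvcont hk0 hk1).intervalIntegrable _ _)
    intro s _
    rw [le_div_iff₀ (hpos hk0 hk1 s), one_mul]
    exact hle1 s
  have h2 : ellF k φ = -∫ s in φ..(0:ℝ), 1 / Real.sqrt (1 - k ^ 2 * Real.sin s ^ 2) := by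
    rw [ellF, intervalIntegral.integral_symm]
  simp only [intervalIntegral.integral_const, smul_eq_mul, mul_one] at this
  linarith

lemma gcont (hk0 : 0 < k) (hk1 : k < 1) : Continuous (ellF k) := by
  have h : Differentiable ℝ (ellF k) := fun φ => (gderiv hk0 hk1 φ).differentiableAt
  exact h.continuous

lemma gsurj (hk0 : 0 < k) (hk1 : k < 1) : Function.Surjective (ellF k) := by
  apply Continuous.surjective (gcont hk0 hk1)
  · exact Filter.tendsto_atTop_mono' _ (Filter.eventually_atTop.2 ⟨0, fun φ hφ => gge hk0 hk1 hφ⟩)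
      Filter.tendsto_id
  · exact Filter.tendsto_atBot_mono' _ (Filter.eventually_atBot.2 ⟨0, fun φ hφ => gle hk0 hk1 hφ⟩)
      Filter.tendsto_id

lemma am_ellF (hk0 : 0 < k) (hk1 : k < 1) (φ : ℝ) : am k (ellF k φ) = φ :=
  Function.leftInverse_invFun (gmono hk0 hk1).injective φ

lemma ellF_am (hk0 : 0 < k) (hk1 : k < 1) (u : ℝ) : ellF k (am k u) = u :=
  Function.invFun_eq (gsurj hk0 hk1 u)

lemma am_zero (hk0 : 0 < k) (hk1 : k < 1) : am k 0 = 0 := by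
  have h0 : ellF k 0 = 0 := by simp [ellF]
  have := am_ellF hk0 hk1 (k := k) 0
  rwa [h0] at this

lemma amcont (hk0 : 0 < k) (hk1 : k < 1) : Continuous (am k) := by
  let iso := StrictMono.orderIsoOfSurjective (ellF k) (gmono hk0 hk1) (gsurj hk0 hk1)
  have heq : am k = ⇑iso.symm := by
    funext u
    apply (gmono hk0 hk1).injective
    rw [ellF_am hk0 hk1]
    exact (iso.apply_symm_apply u).symm
  rw [heq]
  exact iso.symm.continuous

lemma amderiv (hk0 : 0 < k) (hk1 : k < 1) (u : ℝ) :
    HasDerivAt (am k) (Real.sqrt (1 - k ^ 2 * Real.sin (am k u) ^ 2)) u := by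
  have h := HasDerivAt.of_local_left_inverse ((amcont hk0 hk1).continuousAt)
    (gderiv hk0 hk1 (am k u)) (div_pos one_pos (hpos hk0 hk1 _)).ne'
    (Filter.Eventually.of_forall (ellF_am hk0 hk1))
  simpa [one_div] using h


lemma quad {f : ℝ → ℝ} (hf : Continuous f) (h1 : ∀ s, f (π - s) = f s)
    (h2 : ∀ s, f (π + s) = f s) :
    ∫ s in (0:ℝ)..(2 * π), f s = 4 * ∫ s in (0:ℝ)..(π / 2), f s := by
  have i1 : ∫ s in (π:ℝ)..(2 * π), f s = ∫ s in (0:ℝ)..π, f s := by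
    have h := intervalIntegral.integral_comp_add_left (a := (0:ℝ)) (b := π) f π
    simp only [h2] at h
    simp only [add_zero] at h
    rw [two_mul]
    exact h.symm
  have i2 : ∫ s in (π / 2 : ℝ)..π, f s = ∫ s in (0:ℝ)..(π / 2), f s := by
    have h := intervalIntegral.integral_comp_sub_left (a := (0:ℝ)) (b := π / 2) f π
    simp only [h1] at h
    rw [show π - π / 2 = π / 2 by ring, sub_zero] at h
    exact h.symm
  have s1 : ∫ s in (0:ℝ)..(2 * π), f s
      = (∫ s in (0:ℝ)..π, f s) + ∫ s in (π:ℝ)..(2 * π), f s :=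
    (intervalIntegral.integral_add_adjacent_intervals (hf.intervalIntegrable _ _)
      (hf.intervalIntegrable _ _)).symm
  have s2 : ∫ s in (0:ℝ)..(π:ℝ), f s
      = (∫ s in (0:ℝ)..(π / 2), f s) + ∫ s in (π / 2 : ℝ)..π, f s :=
    (intervalIntegral.integral_add_adjacent_intervals (hf.intervalIntegrable _ _)
      (hf.intervalIntegrable _ _)).symm
  rw [s1, i1, s2, i2]; ring

lemma sinsq_pi_sub (s : ℝ) : Real.sin (π - s) ^ 2 = Real.sin s ^ 2 := by
  rw [Real.sin_pi_sub]

lemma sinsq_pi_add (s : ℝ) : Real.sin (π + s) ^ 2 = Real.sin s ^ 2 := by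
  simp [Real.sin_add]

lemma ellF_two_pi (hk0 : 0 < k) (hk1 : k < 1) : ellF k (2 * π) = 4 * ellK k := by
  rw [ellF, ellK, ellF]
  exact quad (hinvcont hk0 hk1) (fun s => by rw [sinsq_pi_sub]) (fun s => by rw [sinsq_pi_add])

lemma ellEinc_two_pi (hk0 : 0 < k) (hk1 : k < 1) : ellEinc k (2 * π) = 4 * ellE k := by
  rw [ellEinc, ellE, ellEinc]
  exact quad hcontinuous (fun s => by rw [sinsq_pi_sub]) (fun s => by rw [sinsq_pi_add])

lemma am_period (hk0 : 0 < k) (hk1 : k < 1) : am k (4 * ellK k) = 2 * π := by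
  rw [← ellF_two_pi hk0 hk1, am_ellF hk0 hk1]

lemma snsq_integral (hk0 : 0 < k) (hk1 : k < 1) :
    ∫ t in (0:ℝ)..(4 * ellK k), sn k t ^ 2
      = (4 * ellK k - 4 * ellE k) / k ^ 2 := by
  have hsub := intervalIntegral.integral_comp_smul_deriv
    (f := am k) (f' := fun x => Real.sqrt (1 - k ^ 2 * Real.sin (am k x) ^ 2))
    (g := fun φ => Real.sin φ ^ 2 / Real.sqrt (1 - k ^ 2 * Real.sin φ ^ 2))
    (a := (0:ℝ)) (b := 4 * ellK k)
    (fun x _ => amderiv hk0 hk1 x)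
    ((hcontinuous.comp (amcont hk0 hk1)).continuousOn)
    (Continuous.div (by fun_prop) hcontinuous (fun s => (hpos hk0 hk1 s).ne'))
  rw [am_zero hk0 hk1, am_period hk0 hk1] at hsub
  have lhs_eq : ∫ t in (0:ℝ)..(4 * ellK k), sn k t ^ 2
      = ∫ x in (0:ℝ)..(4 * ellK k),
          Real.sqrt (1 - k ^ 2 * Real.sin (am k x) ^ 2) •
            (Real.sin (am k x) ^ 2 / Real.sqrt (1 - k ^ 2 * Real.sin (am k x) ^ 2)) := by
    apply intervalIntegral.integral_congr
    intro x _
    simp only [smul_eq_mul, sn]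
    rw [mul_div_cancel₀ _ (hpos hk0 hk1 (am k x)).ne']
  have rhs_eq : ∫ φ in (0:ℝ)..(2 * π),
        Real.sin φ ^ 2 / Real.sqrt (1 - k ^ 2 * Real.sin φ ^ 2)
      = (1 / k ^ 2) * ((∫ φ in (0:ℝ)..(2 * π), 1 / Real.sqrt (1 - k ^ 2 * Real.sin φ ^ 2))
          - ∫ φ in (0:ℝ)..(2 * π), Real.sqrt (1 - k ^ 2 * Real.sin φ ^ 2)) := by
    rw [← intervalIntegral.integral_sub ((hinvcont hk0 hk1).intervalIntegrable _ _)
      (hcontinuous.intervalIntegrable _ _), ← intervalIntegral.integral_const_mul]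
    apply intervalIntegral.integral_congr
    intro φ _
    have hq : Real.sqrt (1 - k ^ 2 * Real.sin φ ^ 2) ^ 2 = 1 - k ^ 2 * Real.sin φ ^ 2 :=
      Real.sq_sqrt (Qpos hk0 hk1 φ).le
    have hne := (hpos hk0 hk1 φ).ne'
    field_simp
    rw [sq] at hq
    rw [show (1 - Real.sin φ ^ 2 * k ^ 2) = 1 - k ^ 2 * Real.sin φ ^ 2 by ring, Real.sq_sqrt (Qpos hk0 hk1 φ).le]
    ring
  simp only [Function.comp_def] at hsub
  rw [lhs_eq, hsub, rhs_eq]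
  have e1 : (∫ φ in (0:ℝ)..(2 * π), 1 / Real.sqrt (1 - k ^ 2 * Real.sin φ ^ 2)) = 4 * ellK k :=
    ellF_two_pi hk0 hk1
  have e2 : (∫ φ in (0:ℝ)..(2 * π), Real.sqrt (1 - k ^ 2 * Real.sin φ ^ 2)) = 4 * ellE k :=
    ellEinc_two_pi hk0 hk1
  rw [e1, e2]
  field_simp
end aux

theorem stmt_6 (k : ℝ) (hk : k ∈ Set.Ioo (0:ℝ) 1) (m₁ m₂ : ℝ) (K₂ : ℕ) (hK₂ : 0 < K₂)
    (θ : ℝ → ℝ) (hθ : ContDiff ℝ (⊤ : ℕ∞) θ)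
    (hode : ∀ t, deriv (deriv θ) t = -Real.sin (θ t))
    (h0 : θ 0 = 0) (h0' : deriv θ 0 = 2 * k)
    (hcos : ∀ t, Real.cos (θ t) = 1 - 2 * k ^ 2 * sn k t ^ 2)
    (hper : Function.Periodic θ (4 * ellK k)) :
    ∫ t in (0:ℝ)..((K₂ : ℝ) * (4 * ellK k)), deriv θ t * (m₁ + m₂ * deriv θ t)
      = 16 * m₂ * (K₂ : ℝ) * (ellE k - (1 - k ^ 2) * ellK k) := by
  obtain ⟨hk0, hk1⟩ := hk
  have hθ2 := contDiff_infty_iff_deriv.mp (hθ.of_le (mod_cast le_top))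
  have hθd : Differentiable ℝ θ := hθ2.1
  have hθ'd : Differentiable ℝ (deriv θ) := (contDiff_infty_iff_deriv.mp hθ2.2).1
  have hθ'c : Continuous (deriv θ) := hθ'd.continuous
  have hsncont : Continuous (fun t => sn k t ^ 2) :=
    ((Real.continuous_sin.comp (amcont hk0 hk1)).pow 2)
  -- energy conservation
  have hsq : ∀ t, (deriv θ t) ^ 2 = 4 * k ^ 2 * (1 - sn k t ^ 2) := by
    have hdiff : Differentiable ℝ (fun t => (deriv θ t) ^ 2 - 2 * Real.cos (θ t)) :=
      (hθ'd.pow 2).sub ((Real.differentiable_cos.comp hθd).const_mul 2)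
    have hE : ∀ t, deriv (fun t => (deriv θ t) ^ 2 - 2 * Real.cos (θ t)) t = 0 := by
      intro t
      have h1 : HasDerivAt (deriv θ) (deriv (deriv θ) t) t := (hθ'd t).hasDerivAt
      have h2 : HasDerivAt (fun t => (deriv θ t) ^ 2)
          (2 * deriv θ t * deriv (deriv θ) t) t := by
        simpa [mul_comm, mul_assoc] using h1.fun_pow 2
      have h3 : HasDerivAt (fun t => Real.cos (θ t)) (-Real.sin (θ t) * deriv θ t) t :=
        (Real.hasDerivAt_cos (θ t)).comp t (hθd t).hasDerivAt
      have h4 : HasDerivAt (fun t => (deriv θ t) ^ 2 - 2 * Real.cos (θ t))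
          (2 * deriv θ t * deriv (deriv θ) t - 2 * (-Real.sin (θ t) * deriv θ t)) t :=
        h2.sub (h3.const_mul 2)
      rw [h4.deriv, hode t]
      ring
    have hconst := is_const_of_deriv_eq_zero hdiff hE
    intro t
    have h5 := hconst t 0
    simp only [h0, h0', Real.cos_zero] at h5
    have h6 := hcos t
    nlinarith [h5, h6]
  -- ∫ deriv θ = 0 over the full range
  have hint1 : ∫ t in (0:ℝ)..((K₂ : ℝ) * (4 * ellK k)), deriv θ t = 0 := by
    rw [intervalIntegral.integral_deriv_eq_sub (fun x _ => hθd x)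
      (hθ'c.intervalIntegrable _ _)]
    have hp := (hper.nat_mul K₂) 0
    rw [zero_add] at hp
    rw [hp, sub_self]
  -- periodicity of (deriv θ)^2
  have hperd : Function.Periodic (fun t => (deriv θ t) ^ 2) (4 * ellK k) := by
    intro t
    have hfe : (fun x => θ (x + 4 * ellK k)) = θ := funext hper
    have : deriv θ (t + 4 * ellK k) = deriv θ t := by
      rw [← deriv_comp_add_const θ (4 * ellK k) t, hfe]
    simp [this]
  have hsplit : ∫ t in (0:ℝ)..((K₂ : ℝ) * (4 * ellK k)), (deriv θ t) ^ 2
      = (K₂ : ℝ) * ∫ t in (0:ℝ)..(4 * ellK k), (deriv θ t) ^ 2 := by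
    have h := hperd.intervalIntegral_add_zsmul_eq (K₂ : ℤ) 0
      (fun t₁ t₂ => ((hθ'c.pow 2).intervalIntegrable _ _))
    simp only [zero_add, zsmul_eq_mul, Int.cast_natCast] at h
    exact h
  -- one-period integral
  have hone : ∫ t in (0:ℝ)..(4 * ellK k), (deriv θ t) ^ 2
      = 16 * (ellE k - (1 - k ^ 2) * ellK k) := by
    have hc : ∫ t in (0:ℝ)..(4 * ellK k), (deriv θ t) ^ 2
        = ∫ t in (0:ℝ)..(4 * ellK k), (4 * k ^ 2 - 4 * k ^ 2 * sn k t ^ 2) := by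
      apply intervalIntegral.integral_congr
      intro t _
      show deriv θ t ^ 2 = 4 * k ^ 2 - 4 * k ^ 2 * sn k t ^ 2
      rw [hsq t]; ring
    rw [hc, intervalIntegral.integral_sub intervalIntegrable_const
      ((continuous_const.fun_mul hsncont).intervalIntegrable _ _),
      intervalIntegral.integral_const, intervalIntegral.integral_const_mul,
      snsq_integral hk0 hk1]
    have hk2 : k ^ 2 ≠ 0 := by positivity
    field_simp
    ring
  -- combine
  have hcomb : ∫ t in (0:ℝ)..((K₂ : ℝ) * (4 * ellK k)), deriv θ t * (m₁ + m₂ * deriv θ t)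
      = m₁ * (∫ t in (0:ℝ)..((K₂ : ℝ) * (4 * ellK k)), deriv θ t)
        + m₂ * ∫ t in (0:ℝ)..((K₂ : ℝ) * (4 * ellK k)), (deriv θ t) ^ 2 := by
    rw [← intervalIntegral.integral_const_mul, ← intervalIntegral.integral_const_mul,
      ← intervalIntegral.integral_add ((continuous_const.fun_mul hθ'c).intervalIntegrable _ _)
        ((continuous_const.fun_mul (hθ'c.fun_pow 2)).intervalIntegrable _ _)]
    apply intervalIntegral.integral_congr
    intro t _
    ring
  rw [hcomb, hint1, hsplit, hone]
  ring
end

section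
/- Let θ(t) be a T-periodic solution of the pendulum θ̈ = -sin θ with T = K₁·2π/Ω for a positive real Ω and positive integer K₁, and let cos a denote the energy constant so that θ̇² = 2(cos θ - cos a). Define I₁(q) = ∫₀^T θ̇(t+q)² cos θ(t+q) sin(Ωt) dt and I₂(q) = ∫₀^T θ̇(t+q) sin θ(t+q) cos(Ωt) dt. Then (3/2)Ω I₁(q) = (cos a - Ω²) I₂(q). -/
open Real MeasureTheory

theorem stmt_8 (Ω a q : ℝ) (hΩ : 0 < Ω) (K₁ : ℕ) (hK₁ : 0 < K₁) (T : ℝ)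
    (hT : T = (K₁ : ℝ) * (2 * π) / Ω) (θ : ℝ → ℝ) (hθ : ContDiff ℝ (⊤ : ℕ∞) θ)
    (hper : Function.Periodic θ T)
    (hode : ∀ t, deriv (deriv θ) t = -Real.sin (θ t))
    (henergy : ∀ t, deriv θ t ^ 2 = 2 * (Real.cos (θ t) - Real.cos a)) :
    (3 / 2) * Ω *
        (∫ t in (0:ℝ)..T, deriv θ (t + q) ^ 2 * Real.cos (θ (t + q)) * Real.sin (Ω * t))
      = (Real.cos a - Ω ^ 2) *
        (∫ t in (0:ℝ)..T, deriv θ (t + q) * Real.sin (θ (t + q)) * Real.cos (Ω * t)) := by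
  have hθdiff : Differentiable ℝ θ := hθ.differentiable (by simp)
  have hθ'diff : Differentiable ℝ (deriv θ) :=
    (contDiff_infty_iff_deriv.mp (hθ.of_le (by simp))).2.differentiable (by simp)
  have hθ'cont : Continuous (deriv θ) := hθ'diff.continuous
  -- HasDerivAt for t ↦ θ (t + q)
  have hcomp : ∀ t : ℝ, HasDerivAt (fun t => θ (t + q)) (deriv θ (t + q)) t := by
    intro t
    have h1 : HasDerivAt (fun t : ℝ => t + q) 1 t := (hasDerivAt_id t).add_const q
    have := ((hθdiff (t + q)).hasDerivAt).comp t h1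
    simpa [Function.comp_def] using this
  have hcomp' : ∀ t : ℝ, HasDerivAt (fun t => deriv θ (t + q)) (-Real.sin (θ (t + q))) t := by
    intro t
    have h1 : HasDerivAt (fun t : ℝ => t + q) 1 t := (hasDerivAt_id t).add_const q
    have h2 : HasDerivAt (deriv θ) (deriv (deriv θ) (t + q)) (t + q) :=
      (hθ'diff (t + q)).hasDerivAt
    rw [hode] at h2
    have := h2.comp t h1
    simpa [Function.comp_def] using this
  have hsin : ∀ t : ℝ, HasDerivAt (fun t => Real.sin (Ω * t)) (Ω * Real.cos (Ω * t)) t := by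
    intro t
    have h1 : HasDerivAt (fun t : ℝ => Ω * t) Ω t := by
      simpa using (hasDerivAt_id t).const_mul Ω
    have := (Real.hasDerivAt_sin (Ω * t)).comp t h1
    simpa [mul_comm, Function.comp_def] using this
  have hcos : ∀ t : ℝ, HasDerivAt (fun t => Real.cos (Ω * t)) (-(Ω * Real.sin (Ω * t))) t := by
    intro t
    have h1 : HasDerivAt (fun t : ℝ => Ω * t) Ω t := by
      simpa using (hasDerivAt_id t).const_mul Ω
    have := (Real.hasDerivAt_cos (Ω * t)).comp t h1
    simpa [mul_comm, Function.comp_def] using this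
  have hsθ : ∀ t : ℝ, HasDerivAt (fun t => Real.sin (θ (t + q)))
      (Real.cos (θ (t + q)) * deriv θ (t + q)) t := by
    intro t
    have := (Real.hasDerivAt_sin (θ (t + q))).comp t (hcomp t)
    simpa [Function.comp_def] using this
  have hcθ : ∀ t : ℝ, HasDerivAt (fun t => Real.cos (θ (t + q)))
      (-Real.sin (θ (t + q)) * deriv θ (t + q)) t := by
    intro t
    have := (Real.hasDerivAt_cos (θ (t + q))).comp t (hcomp t)
    simpa [Function.comp_def] using this
  set F : ℝ → ℝ := fun t => Ω * deriv θ (t + q) * Real.sin (θ (t + q)) * Real.sin (Ω * t)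
      + Real.cos a * Real.cos (θ (t + q)) * Real.cos (Ω * t) - Real.cos (Ω * t) with hF
  set G : ℝ → ℝ := fun t => (3 / 2) * Ω * (deriv θ (t + q) ^ 2 * Real.cos (θ (t + q)) * Real.sin (Ω * t))
      - (Real.cos a - Ω ^ 2) * (deriv θ (t + q) * Real.sin (θ (t + q)) * Real.cos (Ω * t)) with hG
  have hFderiv : ∀ t : ℝ, HasDerivAt F (G t) t := by
    intro t
    have h1 : HasDerivAt (fun t => Ω * deriv θ (t + q) * Real.sin (θ (t + q)) * Real.sin (Ω * t))
        ((Ω * (-Real.sin (θ (t + q))) * Real.sin (θ (t + q))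
          + Ω * deriv θ (t + q) * (Real.cos (θ (t + q)) * deriv θ (t + q))) * Real.sin (Ω * t)
          + Ω * deriv θ (t + q) * Real.sin (θ (t + q)) * (Ω * Real.cos (Ω * t))) t := by
      exact ((((hcomp' t).const_mul Ω).mul (hsθ t)).mul (hsin t))
    have h2 : HasDerivAt (fun t => Real.cos a * Real.cos (θ (t + q)) * Real.cos (Ω * t))
        ((Real.cos a * (-Real.sin (θ (t + q)) * deriv θ (t + q))) * Real.cos (Ω * t)
          + Real.cos a * Real.cos (θ (t + q)) * (-(Ω * Real.sin (Ω * t)))) t := by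
      exact (((hcθ t).const_mul (Real.cos a)).mul (hcos t))
    have h := (h1.add h2).sub (hcos t)
    refine h.congr_deriv (Eq.symm ?_)
    have he := henergy (t + q)
    have hs : Real.sin (θ (t + q)) ^ 2 = 1 - Real.cos (θ (t + q)) ^ 2 := by
      have := Real.sin_sq_add_cos_sq (θ (t + q)); linarith
    simp only [hG]
    linear_combination (Ω * Real.sin (Ω * t) * Real.cos (θ (t + q)) / 2) * he
      + (Ω * Real.sin (Ω * t)) * hs
  have hGcont : Continuous G := by
    apply Continuous.sub
    · exact continuous_const.mul (((((hθ'cont.comp (continuous_id.add continuous_const)).pow 2).mul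
        (Real.continuous_cos.comp (hθdiff.continuous.comp (continuous_id.add continuous_const)))).mul
        (Real.continuous_sin.comp (continuous_const.mul continuous_id))))
    · exact continuous_const.mul ((((hθ'cont.comp (continuous_id.add continuous_const)).mul
        (Real.continuous_sin.comp (hθdiff.continuous.comp (continuous_id.add continuous_const)))).mul
        (Real.continuous_cos.comp (continuous_const.mul continuous_id))))
  have hint : ∫ t in (0:ℝ)..T, G t = F T - F 0 :=
    intervalIntegral.integral_eq_sub_of_hasDerivAt (fun t _ => hFderiv t)
      (hGcont.intervalIntegrable 0 T)
  have hΩT : Ω * T = (K₁ : ℝ) * (2 * π) := by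
    rw [hT]; field_simp
  have hsinT : Real.sin (Ω * T) = 0 := by
    rw [hΩT]
    have h2 : (K₁ : ℝ) * (2 * π) = ((2 * K₁ : ℕ) : ℝ) * π := by push_cast; ring
    rw [h2, Real.sin_nat_mul_pi]
  have hcosT : Real.cos (Ω * T) = 1 := by
    rw [hΩT]
    exact Real.cos_nat_mul_two_pi K₁
  have hθT : θ (T + q) = θ q := by
    rw [add_comm]; exact hper q
  have hbd : F T - F 0 = 0 := by
    simp [hF, hsinT, hcosT, hθT]
  rw [hbd] at hint
  -- integrability of the two integrands
  have hc1 : Continuous (fun t : ℝ => deriv θ (t + q) ^ 2 * Real.cos (θ (t + q)) * Real.sin (Ω * t)) :=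
    (((hθ'cont.comp (continuous_id.add continuous_const)).pow 2).mul
      (Real.continuous_cos.comp (hθdiff.continuous.comp (continuous_id.add continuous_const)))).mul
      (Real.continuous_sin.comp (continuous_const.mul continuous_id))
  have hc2 : Continuous (fun t : ℝ => deriv θ (t + q) * Real.sin (θ (t + q)) * Real.cos (Ω * t)) :=
    ((hθ'cont.comp (continuous_id.add continuous_const)).mul
      (Real.continuous_sin.comp (hθdiff.continuous.comp (continuous_id.add continuous_const)))).mul
      (Real.continuous_cos.comp (continuous_const.mul continuous_id))
  have hsplit : ∫ t in (0:ℝ)..T, G t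
      = (3 / 2) * Ω * (∫ t in (0:ℝ)..T, deriv θ (t + q) ^ 2 * Real.cos (θ (t + q)) * Real.sin (Ω * t))
        - (Real.cos a - Ω ^ 2) * (∫ t in (0:ℝ)..T, deriv θ (t + q) * Real.sin (θ (t + q)) * Real.cos (Ω * t)) := by
    rw [hG]
    rw [intervalIntegral.integral_sub ((hc1.intervalIntegrable 0 T).const_mul _)
      ((hc2.intervalIntegrable 0 T).const_mul _),
      intervalIntegral.integral_const_mul, intervalIntegral.integral_const_mul]
  rw [hsplit] at hint
  linarith
end

section
/- With the hypotheses of the previous identity and assuming additionally that t ↦ cos θ(t) is even, I₂(q) = Ω I_c sin(Ωq) where I_c := ∫₀^T cos θ(t) cos(Ωt) dt. -/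
open Real MeasureTheory

theorem stmt_9 (Ω q : ℝ) (hΩ : 0 < Ω) (K₁ : ℕ) (hK₁ : 0 < K₁) (T : ℝ)
    (hT : T = (K₁ : ℝ) * (2 * π) / Ω) (θ : ℝ → ℝ) (hθ : ContDiff ℝ (⊤ : ℕ∞) θ)
    (hper : Function.Periodic θ T)
    (hode : ∀ t, deriv (deriv θ) t = -Real.sin (θ t))
    (heven : ∀ t, Real.cos (θ (-t)) = Real.cos (θ t)) :
    (∫ t in (0:ℝ)..T, deriv θ (t + q) * Real.sin (θ (t + q)) * Real.cos (Ω * t))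
      = Ω * (∫ t in (0:ℝ)..T, Real.cos (θ t) * Real.cos (Ω * t)) * Real.sin (Ω * q) := by
  have hΩ' : Ω ≠ 0 := hΩ.ne'
  have hΩT : Ω * T = (K₁ : ℝ) * (2 * π) := by rw [hT]; field_simp
  have hθc : Continuous θ := hθ.continuous
  have hθ' : Continuous (deriv θ) := hθ.continuous_deriv (by simp)
  have hθd : Differentiable ℝ θ := hθ.differentiable (by simp)
  have hsinper : ∀ x : ℝ, Real.sin (x + Ω * T) = Real.sin x := by
    intro x; rw [hΩT, Real.sin_add_nat_mul_two_pi]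
  have hcosΩT : Real.cos (Ω * T) = 1 := by rw [hΩT, Real.cos_nat_mul_two_pi]
  -- the function cos θ and its evenness / periodicity
  set f : ℝ → ℝ := fun t => Real.cos (θ t) with hf
  have hfc : Continuous f := Real.continuous_cos.comp hθc
  -- Step 1: ∫₀ᵀ f t sin (Ω t) = 0
  have hzero : (∫ t in (0:ℝ)..T, f t * Real.sin (Ω * t)) = 0 := by
    set g : ℝ → ℝ := fun t => f t * Real.sin (Ω * t) with hg
    have hgc : Continuous g := hfc.mul (Real.continuous_sin.comp (continuous_const.mul continuous_id))
    have hgper : Function.Periodic g T := by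
      intro t
      simp only [hg, hf, hper t]
      rw [mul_add, hsinper]
    have hodd : ∀ t, g (-t) = -g t := by
      intro t
      simp only [hg, hf, heven t, mul_neg, Real.sin_neg]
    have h1 : (∫ t in (0:ℝ)..T, g t) = ∫ t in (-(T/2))..(T/2), g t := by
      have := hgper.intervalIntegral_add_eq 0 (-(T/2))
      rw [zero_add, show -(T/2) + T = T/2 by ring] at this
      exact this
    have h2 : (∫ t in (-(T/2))..(0:ℝ), g t) = - ∫ t in (0:ℝ)..(T/2), g t := by
      have h3 := intervalIntegral.integral_comp_neg (a := (0:ℝ)) (b := T/2) g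
      rw [neg_zero] at h3
      rw [← h3]
      rw [show (∫ x in (0:ℝ)..(T/2), g (-x)) = ∫ x in (0:ℝ)..(T/2), -g x from by
        simp only [hodd]]
      rw [intervalIntegral.integral_neg]
    rw [h1, ← intervalIntegral.integral_add_adjacent_intervals
      (hgc.intervalIntegrable (-(T/2)) 0) (hgc.intervalIntegrable 0 (T/2)), h2]
    ring
  -- Step 2: shift identity
  have hIc := (∫ t in (0:ℝ)..T, f t * Real.cos (Ω * t))
  have hshift : (∫ t in (0:ℝ)..T, f (t + q) * Real.sin (Ω * t))
      = - Real.sin (Ω * q) * ∫ t in (0:ℝ)..T, f t * Real.cos (Ω * t) := by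
    set h : ℝ → ℝ := fun s => f s * Real.sin (Ω * (s - q)) with hh
    have hhc : Continuous h := by
      apply hfc.mul
      exact Real.continuous_sin.comp (continuous_const.mul (continuous_id.sub continuous_const))
    have hhper : Function.Periodic h T := by
      intro t
      simp only [hh, hf, hper t]
      rw [show Ω * (t + T - q) = Ω * (t - q) + Ω * T by ring, hsinper]
    have e1 : (∫ t in (0:ℝ)..T, f (t + q) * Real.sin (Ω * t)) = ∫ t in (0:ℝ)..T, h (t + q) := by
      apply intervalIntegral.integral_congr
      intro t _
      simp only [hh]
      ring_nf
    have e2 : (∫ t in (0:ℝ)..T, h (t + q)) = ∫ s in q..(q + T), h s := by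
      rw [intervalIntegral.integral_comp_add_right]
      rw [zero_add, add_comm T q]
    have e3 : (∫ s in q..(q + T), h s) = ∫ s in (0:ℝ)..T, h s := by
      have := hhper.intervalIntegral_add_eq q 0
      rw [zero_add] at this
      exact this
    have e4 : (∫ s in (0:ℝ)..T, h s)
        = Real.cos (Ω * q) * (∫ s in (0:ℝ)..T, f s * Real.sin (Ω * s))
          - Real.sin (Ω * q) * ∫ s in (0:ℝ)..T, f s * Real.cos (Ω * s) := by
      have expand : ∀ s : ℝ, h s = Real.cos (Ω * q) * (f s * Real.sin (Ω * s))
          - Real.sin (Ω * q) * (f s * Real.cos (Ω * s)) := by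
        intro s
        simp only [hh]
        rw [show Ω * (s - q) = Ω * s - Ω * q by ring, Real.sin_sub]
        ring
      rw [intervalIntegral.integral_congr (g := fun s => Real.cos (Ω * q) * (f s * Real.sin (Ω * s))
          - Real.sin (Ω * q) * (f s * Real.cos (Ω * s))) (fun s _ => expand s)]
      rw [intervalIntegral.integral_sub, intervalIntegral.integral_const_mul,
        intervalIntegral.integral_const_mul]
      · exact (continuous_const.mul (hfc.mul (Real.continuous_sin.comp (continuous_const.mul continuous_id)))).intervalIntegrable _ _
      · exact (continuous_const.mul (hfc.mul (Real.continuous_cos.comp (continuous_const.mul continuous_id)))).intervalIntegrable _ _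
    rw [e1, e2, e3, e4, hzero]
    ring
  -- Step 3: integration by parts
  set u : ℝ → ℝ := fun t => f (t + q) with hu
  set u' : ℝ → ℝ := fun t => -(deriv θ (t + q) * Real.sin (θ (t + q))) with hu'
  set v : ℝ → ℝ := fun t => Real.cos (Ω * t) with hv
  set v' : ℝ → ℝ := fun t => -(Ω * Real.sin (Ω * t)) with hv'
  have huc : Continuous u := hfc.comp (continuous_id.add continuous_const)
  have hu'c : Continuous u' := by
    apply Continuous.neg
    exact ((hθ'.comp (continuous_id.add continuous_const)).mul
      (Real.continuous_sin.comp (hθc.comp (continuous_id.add continuous_const))))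
  have hvc : Continuous v := Real.continuous_cos.comp (continuous_const.mul continuous_id)
  have hv'c : Continuous v' :=
    (continuous_const.mul (Real.continuous_sin.comp (continuous_const.mul continuous_id))).neg
  have hud : ∀ x : ℝ, HasDerivAt u (u' x) x := by
    intro x
    have h1 : HasDerivAt (fun t : ℝ => θ (t + q)) (deriv θ (x + q)) x := by
      have := (hθd (x + q)).hasDerivAt.comp x ((hasDerivAt_id x).add_const q)
      simpa [Function.comp_def] using this
    have := h1.cos
    simpa [hu, hu', hf, mul_comm] using this
  have hvd : ∀ x : ℝ, HasDerivAt v (v' x) x := by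
    intro x
    have h1 : HasDerivAt (fun t : ℝ => Ω * t) Ω x := by
      simpa using (hasDerivAt_id x).const_mul Ω
    have := h1.cos
    simpa [hv, hv', mul_comm] using this
  have hparts : (∫ t in (0:ℝ)..T, u' t * v t + u t * v' t) = u T * v T - u 0 * v 0 := by
    apply intervalIntegral.integral_deriv_mul_eq_sub_of_hasDerivAt
    · exact huc.continuousOn
    · exact hvc.continuousOn
    · exact fun x _ => hud x
    · exact fun x _ => hvd x
    · exact hu'c.intervalIntegrable 0 T
    · exact hv'c.intervalIntegrable 0 T
  have hbound : u T * v T - u 0 * v 0 = 0 := by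
    simp only [hu, hv, hf, mul_zero, Real.cos_zero, hcosΩT]
    rw [show T + q = q + T by ring, hper q]
    ring
  have hsplit : (∫ t in (0:ℝ)..T, u' t * v t + u t * v' t)
      = (∫ t in (0:ℝ)..T, u' t * v t) + ∫ t in (0:ℝ)..T, u t * v' t :=
    intervalIntegral.integral_add ((hu'c.mul hvc).intervalIntegrable 0 T)
      ((huc.mul hv'c).intervalIntegrable 0 T)
  have key : (∫ t in (0:ℝ)..T, u' t * v t) = - ∫ t in (0:ℝ)..T, u t * v' t := by
    have := hparts
    rw [hsplit, hbound] at this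
    linarith
  have huv' : (∫ t in (0:ℝ)..T, u t * v' t)
      = -Ω * ∫ t in (0:ℝ)..T, f (t + q) * Real.sin (Ω * t) := by
    rw [← intervalIntegral.integral_const_mul]
    apply intervalIntegral.integral_congr
    intro t _
    simp only [hu, hv']
    ring
  have hlhs : (∫ t in (0:ℝ)..T, deriv θ (t + q) * Real.sin (θ (t + q)) * Real.cos (Ω * t))
      = - ∫ t in (0:ℝ)..T, u' t * v t := by
    rw [← intervalIntegral.integral_neg]
    apply intervalIntegral.integral_congr
    intro t _
    simp only [hu', hv]
    ring
  rw [hlhs, key, neg_neg, huv', hshift]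
  simp only [hf]
  ring
end

section
/- As k → 1⁻, K(k) - ln(4/√(1-k²)) → 0; that is, the complete elliptic integral of the first kind has the asymptotic K(k) = ln(4/k') + o(1) where k' = √(1-k²). -/
/-!
Split `K(k) = ∫ (1 - sin s)/Δ + ∫ sin s/Δ` with `Δ = √(1 - k² sin² s)`. The second
integral is elementary, `k⁻¹ log ((1 + k)/k')` (the substitution `u = k cos s / k'` turns
it into `arsinh`), and carries the whole logarithmic singularity: it equals
`log (4/k') - log 2 + o(1)`. The first integrand is bounded by `1` and converges to
`(1 - sin s)/cos s = cos s/(1 + sin s)`, so by dominated convergence the first integral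
tends to `∫₀^{π/2} cos s/(1 + sin s) ds = log 2`.
-/

open Real MeasureTheory

open Filter Set Topology intervalIntegral

lemma one_sub_sq_mul_sin_sq_pos {k : ℝ} (hk : k ^ 2 < 1) (s : ℝ) :
    0 < 1 - k ^ 2 * sin s ^ 2 := by
  nlinarith [sin_sq_le_one s, sq_nonneg (sin s), sq_nonneg k]

lemma continuous_div_sqrt_one_sub_sq_mul_sin_sq {k : ℝ} (hk : k ^ 2 < 1) {f : ℝ → ℝ}
    (hf : Continuous f) : Continuous fun s => f s / √(1 - k ^ 2 * sin s ^ 2) :=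
  hf.div (by fun_prop) fun s => (sqrt_pos.2 (one_sub_sq_mul_sin_sq_pos hk s)).ne'

lemma hasDerivAt_arsinh_mul_cos_div_sqrt {k : ℝ} (hk0 : k ≠ 0) (hk : k ^ 2 < 1) (s : ℝ) :
    HasDerivAt (fun t => -k⁻¹ * arsinh (k * cos t / √(1 - k ^ 2)))
      (sin s / √(1 - k ^ 2 * sin s ^ 2)) s := by
  set c := √(1 - k ^ 2)
  have hc : 0 < c := sqrt_pos.2 (by linarith)
  have hc2 : c ^ 2 = 1 - k ^ 2 := sq_sqrt (by linarith)
  have hinner : HasDerivAt (fun t => k * cos t / c) (k * -sin s / c) s :=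
    ((hasDerivAt_cos s).const_mul k).div_const c
  refine (((hasDerivAt_arsinh _).comp s hinner).const_mul (-k⁻¹)).congr_deriv ?_
  have hΔ : 1 - k ^ 2 * sin s ^ 2 = c ^ 2 * (1 + (k * cos s / c) ^ 2) := by
    field_simp
    nlinarith [sin_sq_add_cos_sq s]
  rw [hΔ, sqrt_mul (sq_nonneg c), sqrt_sq hc.le]
  field_simp

lemma arsinh_div_sqrt_one_sub_sq {k : ℝ} (hk : k ^ 2 < 1) :
    arsinh (k / √(1 - k ^ 2)) = log ((1 + k) / √(1 - k ^ 2)) := by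
  have hc : 0 < √(1 - k ^ 2) := sqrt_pos.2 (by linarith)
  have hc2 : √(1 - k ^ 2) ^ 2 = 1 - k ^ 2 := sq_sqrt (by linarith)
  have h : 1 + (k / √(1 - k ^ 2)) ^ 2 = (1 / √(1 - k ^ 2)) ^ 2 := by
    field_simp
    linarith
  rw [arsinh, h, sqrt_sq (by positivity)]
  ring_nf

lemma integral_sin_div_sqrt_one_sub_sq_mul_sin_sq {k : ℝ} (hk0 : k ≠ 0) (hk : k ^ 2 < 1) :
    ∫ s in (0 : ℝ)..π / 2, sin s / √(1 - k ^ 2 * sin s ^ 2)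
      = k⁻¹ * log ((1 + k) / √(1 - k ^ 2)) := by
  rw [integral_eq_sub_of_hasDerivAt (fun s _ => hasDerivAt_arsinh_mul_cos_div_sqrt hk0 hk s)
    ((continuous_div_sqrt_one_sub_sq_mul_sin_sq hk continuous_sin).intervalIntegrable _ _)]
  simp [arsinh_div_sqrt_one_sub_sq hk]

lemma integral_cos_div_one_add_sin : ∫ s in (0 : ℝ)..π / 2, cos s / (1 + sin s) = log 2 := by
  have hpos : ∀ s ∈ uIcc 0 (π / 2), 0 < 1 + sin s := by
    intro s hs
    rw [uIcc_of_le (by positivity)] at hs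
    linarith [sin_nonneg_of_nonneg_of_le_pi hs.1 (by linarith [hs.2, pi_pos])]
  rw [integral_eq_sub_of_hasDerivAt
    (fun s hs => ((hasDerivAt_sin s).const_add 1).log (hpos s hs).ne')
    (continuous_cos.continuousOn.div (by fun_prop)
      fun s hs => (hpos s hs).ne').intervalIntegrable]
  norm_num

lemma one_sub_sin_div_sqrt_one_sub_sin_sq {s : ℝ} (hs : 0 < cos s) :
    (1 - sin s) / √(1 - 1 ^ 2 * sin s ^ 2) = cos s / (1 + sin s) := by
  have hsin : sin s ^ 2 + cos s ^ 2 = 1 := sin_sq_add_cos_sq s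
  rw [show 1 - 1 ^ 2 * sin s ^ 2 = cos s ^ 2 by linarith, sqrt_sq hs.le,
    div_eq_div_iff hs.ne' (by nlinarith [neg_one_le_sin s])]
  linarith

lemma one_sub_sin_div_sqrt_le_one {k s : ℝ} (hk : k ^ 2 < 1) (hs : 0 ≤ sin s) :
    (1 - sin s) / √(1 - k ^ 2 * sin s ^ 2) ≤ 1 := by
  rw [div_le_one (sqrt_pos.2 (one_sub_sq_mul_sin_sq_pos hk s)),
    ← sqrt_sq (sub_nonneg.2 (sin_le_one s))]
  apply sqrt_le_sqrt
  nlinarith [sin_le_one s, mul_le_mul_of_nonneg_right hk.le (sq_nonneg (sin s))]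

lemma tendsto_integral_one_sub_sin_div_sqrt :
    Tendsto (fun k => ∫ s in (0 : ℝ)..π / 2, (1 - sin s) / √(1 - k ^ 2 * sin s ^ 2))
      (𝓝[<] 1) (𝓝 (log 2)) := by
  have hI : uIoc 0 (π / 2) = Ioc 0 (π / 2) := uIoc_of_le (by positivity)
  have hsin : ∀ s ∈ Ioc 0 (π / 2), 0 ≤ sin s := fun s hs =>
    sin_nonneg_of_nonneg_of_le_pi hs.1.le (by linarith [hs.2, pi_pos])
  have hk : ∀ᶠ k in 𝓝[<] (1 : ℝ), k ^ 2 < 1 := by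
    filter_upwards [Ioo_mem_nhdsLT (show (-1 : ℝ) < 1 by norm_num)] with k hk
    nlinarith [hk.1, hk.2]
  rw [← integral_cos_div_one_add_sin]
  refine tendsto_integral_filter_of_dominated_convergence (fun _ => 1) ?_ ?_
    intervalIntegrable_const ?_
  · filter_upwards [hk] with k hk
    exact (continuous_div_sqrt_one_sub_sq_mul_sin_sq hk (by fun_prop)).aestronglyMeasurable
  · filter_upwards [hk] with k hk
    refine .of_forall fun s hs => ?_
    rw [hI] at hs
    have hnum : 0 ≤ 1 - sin s := sub_nonneg.2 (sin_le_one s)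
    rw [norm_of_nonneg (div_nonneg hnum (sqrt_nonneg _))]
    exact one_sub_sin_div_sqrt_le_one hk (hsin s hs)
  · filter_upwards [measure_eq_zero_iff_ae_notMem.1
      (measure_singleton (π / 2))] with s hne hs
    rw [hI] at hs
    have hcos : 0 < cos s := cos_pos_of_mem_Ioo
      ⟨by linarith [hs.1, pi_pos], lt_of_le_of_ne hs.2 hne⟩
    rw [← one_sub_sin_div_sqrt_one_sub_sin_sq hcos]
    refine ContinuousAt.tendsto ?_ |>.mono_left nhdsWithin_le_nhds
    refine continuousAt_const.div (by fun_prop) (sqrt_pos.2 ?_).ne'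
    nlinarith [sin_sq_add_cos_sq s]

lemma ellK_eq_integral_one_sub_sin_add {k : ℝ} (hk0 : k ≠ 0) (hk : k ^ 2 < 1) :
    ellK k = (∫ s in (0 : ℝ)..π / 2, (1 - sin s) / √(1 - k ^ 2 * sin s ^ 2))
      + k⁻¹ * log ((1 + k) / √(1 - k ^ 2)) := by
  rw [← integral_sin_div_sqrt_one_sub_sq_mul_sin_sq hk0 hk, ← integral_add
    ((continuous_div_sqrt_one_sub_sq_mul_sin_sq hk (by fun_prop)).intervalIntegrable _ _)
    ((continuous_div_sqrt_one_sub_sq_mul_sin_sq hk continuous_sin).intervalIntegrable _ _)]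
  simp only [ellK, ellF, ← add_div, sub_add_cancel]

-- The singular part is isolated as `x log x` at `x = 1 - k²`.
lemma inv_mul_log_sub_log_eq {k : ℝ} (hk0 : k ≠ 0) (hk : k ^ 2 < 1) :
    k⁻¹ * log ((1 + k) / √(1 - k ^ 2)) - log (4 / √(1 - k ^ 2))
      = k⁻¹ * log (1 + k) - log 4 - (1 - k ^ 2) * log (1 - k ^ 2) / (2 * k * (1 + k)) := by
  have h1k : 0 < 1 + k := by nlinarith
  have hk2 : 0 < 1 - k ^ 2 := by linarith
  have hc : √(1 - k ^ 2) ≠ 0 := (sqrt_pos.2 hk2).ne'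
  rw [log_div h1k.ne' hc, log_div four_ne_zero hc, log_sqrt hk2.le]
  field_simp
  ring

lemma tendsto_inv_mul_log_sub_log :
    Tendsto (fun k : ℝ => k⁻¹ * log ((1 + k) / √(1 - k ^ 2)) - log (4 / √(1 - k ^ 2)))
      (𝓝[<] 1) (𝓝 (-log 2)) := by
  have hcont : ContinuousAt (fun k : ℝ =>
      k⁻¹ * log (1 + k) - log 4 - (1 - k ^ 2) * log (1 - k ^ 2) / (2 * k * (1 + k))) 1 := by
    have hxlogx := continuous_mul_log.continuousAt.comp (f := fun k : ℝ => 1 - k ^ 2)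
      (x := 1) (by fun_prop)
    refine .sub (.sub (.mul (continuousAt_inv₀ one_ne_zero) ?_) continuousAt_const)
      (.div hxlogx (by fun_prop) ?_)
    · exact (continuousAt_log (by norm_num)).comp (by fun_prop)
    · norm_num
  have hlim : -log 2
      = 1⁻¹ * log (1 + 1) - log 4 - (1 - 1 ^ 2) * log (1 - 1 ^ 2) / (2 * 1 * (1 + 1)) := by
    rw [show (4 : ℝ) = 2 ^ 2 by norm_num, log_pow]
    norm_num
    ring
  rw [hlim]
  refine (hcont.tendsto.mono_left nhdsWithin_le_nhds).congr' ?_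
  filter_upwards [Ioo_mem_nhdsLT (show (0 : ℝ) < 1 by norm_num)] with k hk
  exact (inv_mul_log_sub_log_eq hk.1.ne' (by nlinarith [hk.1, hk.2])).symm

theorem stmt_18 :
    Filter.Tendsto (fun k : ℝ => ellK k - Real.log (4 / Real.sqrt (1 - k ^ 2)))
      (nhdsWithin 1 (Set.Ioo 0 1)) (nhds 0) := by
  have h := (tendsto_integral_one_sub_sin_div_sqrt.add tendsto_inv_mul_log_sub_log).mono_left
    (nhdsWithin_mono 1 (Ioo_subset_Iio_self (a := 0)))
  rw [add_neg_cancel] at h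
  refine h.congr' ?_
  filter_upwards [self_mem_nhdsWithin] with k hk
  rw [ellK_eq_integral_one_sub_sin_add hk.1.ne' (by nlinarith [hk.1, hk.2])]
  ring
end
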